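/- Let A ∈ ℂ^{m×m} be arbitrary and let B ∈ ℂ^{n×n} be Hermitian with eigenvalues μ_1, ..., μ_n. Then for every bivariate polynomial p(x,y) = Σ_{i=0}^{k} Σ_{j=0}^{ℓ} p_{ij} x^i y^j and every C ∈ ℂ^{m×n}, ‖p{A,B}(C)‖_F ≤ ( max_{1 ≤ b ≤ n} ‖p_{μ_b}(A)‖_2 ) · ‖C‖_F, where p_μ(A) := Σ_{i=0}^{k} (Σ_{j=0}^{ℓ} p_{ij} μ^j) A^i and ‖·‖_2 denotes the spectral (operator 2-) norm. -/

import Mathlib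

open Matrix

/-- Frobenius norm of a complex matrix. -/
noncomputable def frobNorm {m n : ℕ} (M : Matrix (Fin m) (Fin n) ℂ) : ℝ :=
  Real.sqrt (∑ a, ∑ b, ‖M a b‖ ^ 2)

/-- Spectral norm (operator 2-norm) of a square complex matrix. -/
noncomputable def specNorm {m : ℕ} (M : Matrix (Fin m) (Fin m) ℂ) : ℝ :=
  ‖Matrix.toEuclideanCLM (𝕜 := ℂ) M‖

/-! Diagonalise `Bᵀ = V D V⋆` with `V` unitary (the entrywise conjugate of an eigenvector matrix
of `B`). Then `p{A,B}(C) = p{A,D}(C V) V⋆`, the Frobenius norm is invariant under unitary right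
factors, and the `b`-th column of `p{A,D}(C V)` is `p_{μ_b}(A)` applied to the `b`-th column of
`C V`. Summing the squares of `‖p_{μ_b}(A) x‖ ≤ ‖p_{μ_b}(A)‖₂ ‖x‖` over the columns gives the
bound. -/

section BivariateEval

variable {R : Type*} [CommRing R] {m n : Type*} [Fintype m] [Fintype n] [DecidableEq m]
  [DecidableEq n] {k l : ℕ}

-- The paper's `p{A,B}(C)` is `bivariateEval p A Bᵀ C`, and `p_μ(A)` is `partialEval p A μ`.
def bivariateEval (p : Fin (k + 1) → Fin (l + 1) → R) (A : Matrix m m R) (B : Matrix n n R)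
    (C : Matrix m n R) : Matrix m n R :=
  ∑ i : Fin (k + 1), ∑ j : Fin (l + 1), p i j • (A ^ (i : ℕ) * C * B ^ (j : ℕ))

def partialEval (p : Fin (k + 1) → Fin (l + 1) → R) (A : Matrix m m R) (μ : R) :
    Matrix m m R :=
  ∑ i : Fin (k + 1), (∑ j : Fin (l + 1), p i j * μ ^ (j : ℕ)) • A ^ (i : ℕ)

lemma bivariateEval_conjStarAlgAut [StarRing R] (p : Fin (k + 1) → Fin (l + 1) → R)
    (A : Matrix m m R) (V : unitary (Matrix n n R)) (D : Matrix n n R) (C : Matrix m n R) :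
    bivariateEval p A (Unitary.conjStarAlgAut R _ V D) C =
      bivariateEval p A D (C * (V : Matrix n n R)) * (star V : Matrix n n R) := by
  simp only [bivariateEval, ← map_pow]
  simp only [Unitary.conjStarAlgAut_apply, Matrix.sum_mul, Matrix.smul_mul, Matrix.mul_assoc]

lemma transpose_bivariateEval_diagonal (p : Fin (k + 1) → Fin (l + 1) → R) (A : Matrix m m R)
    (d : n → R) (E : Matrix m n R) (b : n) :
    (bivariateEval p A (diagonal d) E)ᵀ b = partialEval p A (d b) *ᵥ Eᵀ b := by
  ext a
  simp only [bivariateEval, partialEval, transpose_apply, Matrix.sum_apply, Matrix.smul_apply,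
    diagonal_pow, mul_diagonal, sum_mulVec, smul_mulVec, Finset.sum_apply, Pi.smul_apply,
    smul_eq_mul, Finset.sum_mul]
  refine Finset.sum_congr rfl fun i _ => Finset.sum_congr rfl fun j _ => ?_
  simp only [mul_apply, mulVec, dotProduct, transpose_apply, Pi.pow_apply]
  ring

end BivariateEval

lemma Matrix.IsHermitian.transpose_eq_conjStarAlgAut {𝕜 : Type*} [RCLike 𝕜] {n : Type*}
    [Fintype n] [DecidableEq n] {B : Matrix n n 𝕜} (hB : B.IsHermitian) :
    Bᵀ = Unitary.conjStarAlgAut 𝕜 _ (UnitaryGroup.map_star hB.eigenvectorUnitary)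
      (diagonal (RCLike.ofReal ∘ hB.eigenvalues)) := by
  conv_lhs => rw [hB.spectral_theorem]
  simp only [Unitary.conjStarAlgAut_apply, transpose_mul, diagonal_transpose, Matrix.mul_assoc]
  congr 2
  ext
  simp

lemma sum_sum_norm_sq_eq_re_trace {m n : Type*} [Fintype m] [Fintype n]
    (M : Matrix m n ℂ) : ∑ a, ∑ b, ‖M a b‖ ^ 2 = (M * Mᴴ).trace.re := by
  simp [trace, mul_apply, Complex.mul_conj, Complex.normSq_eq_norm_sq, -Complex.ofReal_pow]

lemma frobNorm_mul_unitary {m n : ℕ} (M : Matrix (Fin m) (Fin n) ℂ)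
    {W : Matrix (Fin n) (Fin n) ℂ} (hW : W ∈ unitary (Matrix (Fin n) (Fin n) ℂ)) :
    frobNorm (M * W) = frobNorm M := by
  rw [frobNorm, frobNorm, sum_sum_norm_sq_eq_re_trace, sum_sum_norm_sq_eq_re_trace,
    conjTranspose_mul, Matrix.mul_assoc, ← Matrix.mul_assoc W, ← star_eq_conjTranspose W,
    Unitary.mul_star_self_of_mem hW, Matrix.one_mul]

lemma sum_norm_sq_mulVec_le {m : ℕ} (N : Matrix (Fin m) (Fin m) ℂ) (x : Fin m → ℂ) :
    ∑ a, ‖(N *ᵥ x) a‖ ^ 2 ≤ specNorm N ^ 2 * ∑ a, ‖x a‖ ^ 2 := by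
  have h := (toEuclideanCLM (𝕜 := ℂ) N).le_opNorm (WithLp.toLp 2 x)
  rw [toEuclideanCLM_toLp] at h
  have norm_sq (y : Fin m → ℂ) : ‖WithLp.toLp 2 y‖ ^ 2 = ∑ a, ‖y a‖ ^ 2 :=
    EuclideanSpace.norm_sq_eq _
  rw [← norm_sq, ← norm_sq, ← mul_pow]
  exact pow_le_pow_left₀ (norm_nonneg _) h 2

lemma frobNorm_le_of_transpose_eq_mulVec {m n : ℕ} {M E : Matrix (Fin m) (Fin n) ℂ}
    (N : Fin n → Matrix (Fin m) (Fin m) ℂ) {S : ℝ} (hS : 0 ≤ S)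
    (hN : ∀ b, specNorm (N b) ≤ S) (hM : ∀ b, Mᵀ b = N b *ᵥ Eᵀ b) :
    frobNorm M ≤ S * frobNorm E := by
  have hsq : ∑ a, ∑ b, ‖M a b‖ ^ 2 ≤ S ^ 2 * ∑ a, ∑ b, ‖E a b‖ ^ 2 := by
    rw [Finset.sum_comm, Finset.sum_comm (f := fun a b => ‖E a b‖ ^ 2), Finset.mul_sum]
    refine Finset.sum_le_sum fun b _ => ?_
    calc ∑ a, ‖M a b‖ ^ 2 = ∑ a, ‖(N b *ᵥ Eᵀ b) a‖ ^ 2 := by rw [← hM b]; rfl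
      _ ≤ specNorm (N b) ^ 2 * ∑ a, ‖E a b‖ ^ 2 := sum_norm_sq_mulVec_le _ _
      _ ≤ S ^ 2 * ∑ a, ‖E a b‖ ^ 2 := by
        gcongr
        · exact norm_nonneg _
        · exact hN b
  rw [frobNorm, frobNorm, ← Real.sqrt_sq hS, ← Real.sqrt_mul (by positivity)]
  exact Real.sqrt_le_sqrt hsq

/-- Key estimate from part (b) of the norm estimate lemma: for arbitrary `A` and
Hermitian `B` with eigenvalues `μ_b`,
`‖p{A,B}(C)‖_F ≤ max_b ‖p_{μ_b}(A)‖₂ · ‖C‖_F`, where `p_μ(A) = Σᵢ (Σⱼ pᵢⱼ μʲ) Aⁱ`. -/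
theorem bivariate_norm_estimate_one_hermitian {m n k l : ℕ} (hn : 0 < n)
    (A : Matrix (Fin m) (Fin m) ℂ) (B : Matrix (Fin n) (Fin n) ℂ)
    (hB : B.IsHermitian)
    (p : Fin (k + 1) → Fin (l + 1) → ℂ) (C : Matrix (Fin m) (Fin n) ℂ) :
    frobNorm (∑ i : Fin (k + 1), ∑ j : Fin (l + 1),
        p i j • (A ^ (i : ℕ) * C * Bᵀ ^ (j : ℕ))) ≤
      (Finset.univ.sup' ⟨⟨0, hn⟩, Finset.mem_univ _⟩
        fun b : Fin n =>
          specNorm (∑ i : Fin (k + 1),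
            (∑ j : Fin (l + 1), p i j * (hB.eigenvalues b : ℂ) ^ (j : ℕ)) • A ^ (i : ℕ)))
        * frobNorm C := by
  set S := Finset.univ.sup' ⟨⟨0, hn⟩, Finset.mem_univ _⟩
    fun b => specNorm (partialEval p A (hB.eigenvalues b : ℂ))
  have hS : ∀ b, specNorm (partialEval p A (hB.eigenvalues b : ℂ)) ≤ S :=
    fun b => Finset.le_sup' (fun b => specNorm (partialEval p A (hB.eigenvalues b : ℂ)))
      (Finset.mem_univ b)
  set V := UnitaryGroup.map_star hB.eigenvectorUnitary
  change frobNorm (bivariateEval p A Bᵀ C) ≤ S * frobNorm C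
  calc frobNorm (bivariateEval p A Bᵀ C)
      = frobNorm (bivariateEval p A (diagonal (RCLike.ofReal ∘ hB.eigenvalues))
          (C * (V : Matrix (Fin n) (Fin n) ℂ))) := by
        rw [hB.transpose_eq_conjStarAlgAut, bivariateEval_conjStarAlgAut]
        exact frobNorm_mul_unitary _ (Unitary.star_mem V.2)
    _ ≤ S * frobNorm (C * (V : Matrix (Fin n) (Fin n) ℂ)) :=
        frobNorm_le_of_transpose_eq_mulVec _ ((norm_nonneg _).trans (hS ⟨0, hn⟩)) hS
          (transpose_bivariateEval_diagonal _ _ _ _)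
    _ = S * frobNorm C := by rw [frobNorm_mul_unitary _ V.2]
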